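/- arXiv:1109.5985 — 4 statements merged into one kernel-verified Lean document; each statement's English description precedes it below -/
import Mathlib

section
/- Let V be a random variable taking values in the open interval (0,1). For x > 0 define f₁(x) = ∫₀ˣ E[exp(-eʸ V)] dy and f₂(x) = ∫₀ˣ P{V < e^{-y}} dy. Then for all x > 0, -∫₀¹ (1 - e^{-y})/y dy ≤ f₁(x) - f₂(x) ≤ ∫₁^∞ e^{-y}/y dy. -/
open MeasureTheory


lemma my_subst (v : ℝ) (hv : 0 < v) (a b : ℝ) (G : ℝ → ℝ) (hG : Continuous G) :
    ∫ y in a..b, G (Real.exp y * v) =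
      ∫ t in (Real.exp a * v)..(Real.exp b * v), G t / t := by
  have h := intervalIntegral.integral_comp_smul_deriv' (a := a) (b := b)
    (f := fun y => Real.exp y * v) (f' := fun y => Real.exp y * v)
    (g := fun t => G t / t)
    (fun x _ => (Real.hasDerivAt_exp x).mul_const v)
    ((Real.continuous_exp.mul continuous_const).continuousOn)
    (by
      apply ContinuousOn.div hG.continuousOn continuousOn_id
      rintro t ⟨y, -, rfl⟩
      exact ne_of_gt (mul_pos (Real.exp_pos y) hv))
  rw [← h]
  apply intervalIntegral.integral_congr
  intro y _
  have : Real.exp y * v ≠ 0 := ne_of_gt (mul_pos (Real.exp_pos y) hv)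
  simp only [smul_eq_mul, Function.comp]
  field_simp

lemma g1_nonneg {t : ℝ} (ht : 0 ≤ t) : 0 ≤ (1 - Real.exp (-t)) / t := by
  apply div_nonneg _ ht
  have : Real.exp (-t) ≤ 1 := Real.exp_le_one_iff.mpr (by linarith)
  linarith

lemma g1_le_one {t : ℝ} (ht : 0 ≤ t) : (1 - Real.exp (-t)) / t ≤ 1 := by
  rcases eq_or_lt_of_le ht with h | h
  · simp [← h]
  · rw [div_le_one h]
    have := Real.add_one_le_exp (-t)
    linarith

lemma g1_meas : Measurable (fun t => (1 - Real.exp (-t)) / t) :=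
  (measurable_const.sub (Real.measurable_exp.comp measurable_neg)).div measurable_id

lemma int1 : IntervalIntegrable (fun t => (1 - Real.exp (-t)) / t) volume 0 1 := by
  rw [intervalIntegrable_iff_integrableOn_Ioc_of_le (by norm_num)]
  apply Integrable.mono' (g := fun _ => (1:ℝ)) (integrableOn_const (by simp))
  · exact g1_meas.aestronglyMeasurable.restrict
  · filter_upwards [ae_restrict_mem measurableSet_Ioc] with t ht
    rw [Real.norm_eq_abs, abs_of_nonneg (g1_nonneg ht.1.le)]
    exact g1_le_one ht.1.le

lemma int2 : IntegrableOn (fun t => Real.exp (-t) / t) (Set.Ioi 1) := by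
  have h1 : IntegrableOn (fun t => Real.exp (-t)) (Set.Ioi (1:ℝ)) := by
    simpa using exp_neg_integrableOn_Ioi (b := 1) 1 one_pos
  apply Integrable.mono' h1
  · exact ((Real.measurable_exp.comp measurable_neg).div measurable_id).aestronglyMeasurable.restrict
  · filter_upwards [ae_restrict_mem measurableSet_Ioi] with t ht
    have ht' : (1:ℝ) < t := ht
    rw [Real.norm_eq_abs, abs_of_nonneg (div_nonneg (Real.exp_pos _).le (by linarith)),
      div_le_iff₀ (by linarith)]
    nlinarith [Real.exp_pos (-t)]

lemma mono1' {a b : ℝ} (h0 : 0 ≤ a) (hab : a ≤ b) (hb1 : b ≤ 1) :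
    ∫ t in a..b, (1 - Real.exp (-t)) / t ≤ ∫ t in (0:ℝ)..1, (1 - Real.exp (-t)) / t := by
  have sub : ∀ c d : ℝ, 0 ≤ c → c ≤ d → d ≤ 1 →
      IntervalIntegrable (fun t => (1 - Real.exp (-t)) / t) volume c d := by
    intro c d hc hcd hd
    apply int1.mono_set
    rw [Set.uIcc_of_le hcd, Set.uIcc_of_le (by norm_num)]
    exact Set.Icc_subset_Icc hc hd
  have i1 := sub 0 a le_rfl h0 (le_trans hab hb1)
  have i2 := sub a b h0 hab hb1
  have i3 := sub b 1 (le_trans h0 hab) hb1 le_rfl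
  have e1 := intervalIntegral.integral_add_adjacent_intervals i1 i2
  have e2 := intervalIntegral.integral_add_adjacent_intervals (i1.trans i2) i3
  have p1 : 0 ≤ ∫ t in (0:ℝ)..a, (1 - Real.exp (-t)) / t :=
    intervalIntegral.integral_nonneg h0 (fun u hu => g1_nonneg hu.1)
  have p3 : 0 ≤ ∫ t in b..(1:ℝ), (1 - Real.exp (-t)) / t :=
    intervalIntegral.integral_nonneg hb1 (fun u hu => g1_nonneg (le_trans (le_trans h0 hab) hu.1))
  linarith

lemma mono2 {b : ℝ} (hb : 1 ≤ b) :
    ∫ t in (1:ℝ)..b, Real.exp (-t) / t ≤ ∫ t in Set.Ioi (1:ℝ), Real.exp (-t) / t := by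
  rw [intervalIntegral.integral_of_le hb]
  apply setIntegral_mono_set int2
  · filter_upwards [ae_restrict_mem measurableSet_Ioi] with t ht
    exact div_nonneg (Real.exp_pos _).le (by linarith [Set.mem_Ioi.mp ht])
  · exact HasSubset.Subset.eventuallyLE Set.Ioc_subset_Ioi_self

lemma ae_ne_const (c : ℝ) : ∀ᵐ y : ℝ, y ≠ c := by
  rw [ae_iff]; simp

lemma intF {v : ℝ} (hv : 0 < v) (a b : ℝ) :
    IntervalIntegrable
      (fun y => Real.exp (-(Real.exp y * v)) - if v < Real.exp (-y) then 1 else 0)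
      volume a b := by
  rw [intervalIntegrable_iff]
  apply Integrable.mono' (g := fun _ => (2:ℝ)) (integrableOn_const measure_Ioc_lt_top.ne)
  · have hm : Measurable (fun y => Real.exp (-(Real.exp y * v)) - if v < Real.exp (-y) then 1 else 0) := by
      apply Measurable.sub
      · exact Real.measurable_exp.comp ((Real.measurable_exp.mul_const v).neg)
      · exact Measurable.ite (measurableSet_lt measurable_const
          (Real.measurable_exp.comp measurable_neg)) measurable_const measurable_const
    exact hm.aestronglyMeasurable.restrict
  · filter_upwards with y
    have h1 : 0 < Real.exp (-(Real.exp y * v)) := Real.exp_pos _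
    have h2 : Real.exp (-(Real.exp y * v)) ≤ 1 :=
      Real.exp_le_one_iff.mpr (by nlinarith [Real.exp_pos y])
    rw [Real.norm_eq_abs, abs_le]
    split_ifs <;> constructor <;> linarith

lemma keyD {v x : ℝ} (hv : 0 < v) (hv1 : v < 1) (hx : 0 < x) :
    -(∫ t in (0:ℝ)..1, (1 - Real.exp (-t)) / t) ≤
      (∫ y in (0:ℝ)..x, (Real.exp (-(Real.exp y * v)) - if v < Real.exp (-y) then 1 else 0)) ∧
    (∫ y in (0:ℝ)..x, (Real.exp (-(Real.exp y * v)) - if v < Real.exp (-y) then 1 else 0)) ≤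
      ∫ t in Set.Ioi (1:ℝ), Real.exp (-t) / t := by
  have hI2 : 0 ≤ ∫ t in Set.Ioi (1:ℝ), Real.exp (-t) / t :=
    setIntegral_nonneg measurableSet_Ioi
      (fun t ht => div_nonneg (Real.exp_pos _).le (by linarith [Set.mem_Ioi.mp ht]))
  set c := -Real.log v with hcdef
  have hc : Real.exp c * v = 1 := by
    rw [hcdef, Real.exp_neg, Real.exp_log hv]
    field_simp
  have hc0 : 0 < c := by
    have := Real.log_neg hv hv1
    simp [hcdef]; linarith
  have hflip : ∀ a b : ℝ, v ≤ a →
      (∫ t in a..b, (Real.exp (-t) - 1) / t) = -∫ t in a..b, (1 - Real.exp (-t)) / t := by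
    intro a b _
    rw [← intervalIntegral.integral_neg]
    apply intervalIntegral.integral_congr
    intro t _
    ring
  by_cases hxc : x ≤ c
  · -- exp x * v ≤ 1
    set b := Real.exp x * v with hbdef
    have hvb : v ≤ b := by
      rw [hbdef]
      nlinarith [Real.one_le_exp hx.le]
    have hb1 : b ≤ 1 := by
      rw [hbdef, ← hc]
      have := Real.exp_le_exp.mpr hxc
      nlinarith
    have e1 : (∫ y in (0:ℝ)..x, (Real.exp (-(Real.exp y * v)) - if v < Real.exp (-y) then 1 else 0))
        = ∫ y in (0:ℝ)..x, (Real.exp (-(Real.exp y * v)) - 1) := by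
      apply intervalIntegral.integral_congr_ae
      filter_upwards [ae_ne_const x] with y hy hyI
      rw [Set.uIoc_of_le hx.le] at hyI
      have hyx : y < x := lt_of_le_of_ne hyI.2 hy
      have hlt : v < Real.exp (-y) := by
        have h1 : Real.log v < -y := by simp [hcdef] at hxc ⊢; linarith
        calc v = Real.exp (Real.log v) := (Real.exp_log hv).symm
        _ < Real.exp (-y) := Real.exp_lt_exp.mpr h1
      rw [if_pos hlt]
    have e2 := my_subst v hv 0 x (fun t => Real.exp (-t) - 1)
      (by continuity)
    simp only [Real.exp_zero, one_mul] at e2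
    rw [e1, e2, ← hbdef, hflip v b le_rfl]
    have hm := mono1' hv.le hvb hb1
    have hnn : 0 ≤ ∫ t in v..b, (1 - Real.exp (-t)) / t :=
      intervalIntegral.integral_nonneg hvb (fun u hu => g1_nonneg (le_trans hv.le hu.1))
    constructor <;> linarith
  · push_neg at hxc
    set b := Real.exp x * v with hbdef
    have hb1 : 1 ≤ b := by
      rw [hbdef, ← hc]
      have := Real.exp_le_exp.mpr hxc.le
      nlinarith [Real.exp_pos c]
    have hsplit := intervalIntegral.integral_add_adjacent_intervals (intF hv 0 c) (intF hv c x)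
    have P1 : (∫ y in (0:ℝ)..c, (Real.exp (-(Real.exp y * v)) - if v < Real.exp (-y) then 1 else 0))
        = ∫ t in v..(1:ℝ), (Real.exp (-t) - 1) / t := by
      have e1 : (∫ y in (0:ℝ)..c, (Real.exp (-(Real.exp y * v)) - if v < Real.exp (-y) then 1 else 0))
          = ∫ y in (0:ℝ)..c, (Real.exp (-(Real.exp y * v)) - 1) := by
        apply intervalIntegral.integral_congr_ae
        filter_upwards [ae_ne_const c] with y hy hyI
        rw [Set.uIoc_of_le hc0.le] at hyI
        have hyx : y < c := lt_of_le_of_ne hyI.2 hy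
        have hlt : v < Real.exp (-y) := by
          have h1 : Real.log v < -y := by simp [hcdef] at hyx ⊢; linarith
          calc v = Real.exp (Real.log v) := (Real.exp_log hv).symm
          _ < Real.exp (-y) := Real.exp_lt_exp.mpr h1
        rw [if_pos hlt]
      have e2 := my_subst v hv 0 c (fun t => Real.exp (-t) - 1) (by continuity)
      simp only [Real.exp_zero, one_mul, hc] at e2
      rw [e1, e2]
    have P2 : (∫ y in c..x, (Real.exp (-(Real.exp y * v)) - if v < Real.exp (-y) then 1 else 0))
        = ∫ t in (1:ℝ)..b, Real.exp (-t) / t := by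
      have e1 : (∫ y in c..x, (Real.exp (-(Real.exp y * v)) - if v < Real.exp (-y) then 1 else 0))
          = ∫ y in c..x, Real.exp (-(Real.exp y * v)) := by
        apply intervalIntegral.integral_congr_ae
        filter_upwards [ae_ne_const c] with y hy hyI
        rw [Set.uIoc_of_le hxc.le] at hyI
        have hyc : c < y := hyI.1
        have hlt : ¬ (v < Real.exp (-y)) := by
          push_neg
          have h1 : -y < Real.log v := by simp [hcdef] at hyc ⊢; linarith
          calc Real.exp (-y) ≤ Real.exp (Real.log v) := Real.exp_le_exp.mpr h1.le
          _ = v := Real.exp_log hv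
        rw [if_neg hlt, sub_zero]
      have e2 := my_subst v hv c x (fun t => Real.exp (-t)) (by continuity)
      simp only [hc, ← hbdef] at e2
      rw [e1, e2]
    rw [← hsplit, P1, P2, hflip v 1 le_rfl]
    have hT1a := mono1' hv.le hv1.le le_rfl
    have hT1b : 0 ≤ ∫ t in v..(1:ℝ), (1 - Real.exp (-t)) / t :=
      intervalIntegral.integral_nonneg hv1.le (fun u hu => g1_nonneg (le_trans hv.le hu.1))
    have hT2a : 0 ≤ ∫ t in (1:ℝ)..b, Real.exp (-t) / t :=
      intervalIntegral.integral_nonneg hb1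
        (fun u hu => div_nonneg (Real.exp_pos _).le (by linarith [hu.1]))
    have hT2b := mono2 hb1
    constructor <;> linarith

/-- For a random variable `V ∈ (0,1)`, with
`f₁(x) = ∫₀ˣ E[exp(-eʸ V)] dy` and `f₂(x) = ∫₀ˣ P{V < e^{-y}} dy`, one has
`-∫₀¹ (1-e^{-y})/y dy ≤ f₁(x) - f₂(x) ≤ ∫₁^∞ e^{-y}/y dy` for all `x > 0`. -/
theorem f1_sub_f2_bounds
    {Ω : Type*} [MeasurableSpace Ω] (P : Measure Ω) [IsProbabilityMeasure P]
    (V : Ω → ℝ) (hV : Measurable V) (hV01 : ∀ ω, V ω ∈ Set.Ioo (0:ℝ) 1)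
    (f₁ f₂ : ℝ → ℝ)
    (hf₁ : ∀ x, f₁ x = ∫ y in (0:ℝ)..x, ∫ ω, Real.exp (-(Real.exp y * V ω)) ∂P)
    (hf₂ : ∀ x, f₂ x = ∫ y in (0:ℝ)..x, (P {ω | V ω < Real.exp (-y)}).toReal) :
    ∀ x > 0,
      -(∫ y in (0:ℝ)..1, (1 - Real.exp (-y)) / y) ≤ f₁ x - f₂ x ∧
      f₁ x - f₂ x ≤ ∫ y in Set.Ioi (1:ℝ), Real.exp (-y) / y := by
  intro x hx
  set μ := volume.restrict (Set.Ioc (0:ℝ) x) with hμ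
  haveI : IsFiniteMeasure μ := ⟨by
    rw [hμ, Measure.restrict_apply_univ]; exact measure_Ioc_lt_top⟩
  set e : ℝ → Ω → ℝ := fun y ω => Real.exp (-(Real.exp y * V ω)) with he
  set ind : ℝ → Ω → ℝ := fun y ω => if V ω < Real.exp (-y) then 1 else 0 with hind
  -- measurability
  have hme : Measurable (Function.uncurry e) :=
    Real.measurable_exp.comp (((Real.measurable_exp.comp measurable_fst).mul
      (hV.comp measurable_snd)).neg)
  have hmind : Measurable (Function.uncurry ind) := by
    apply Measurable.ite _ measurable_const measurable_const
    exact measurableSet_lt (hV.comp measurable_snd)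
      (Real.measurable_exp.comp measurable_fst.neg)
  -- product integrability
  have hbound_e : ∀ p : ℝ × Ω, ‖Function.uncurry e p‖ ≤ 1 := by
    rintro ⟨y, ω⟩
    have h1 := Real.exp_pos (-(Real.exp y * V ω))
    have h2 : Real.exp (-(Real.exp y * V ω)) ≤ 1 :=
      Real.exp_le_one_iff.mpr (by nlinarith [Real.exp_pos y, (hV01 ω).1])
    simp only [Function.uncurry, Real.norm_eq_abs, he]
    rw [abs_of_pos h1]; exact h2
  have hprod_e : Integrable (Function.uncurry e) (μ.prod P) := by
    apply Integrable.mono' (integrable_const 1) hme.aestronglyMeasurable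
    filter_upwards with p using hbound_e p
  have hprod_ind : Integrable (Function.uncurry ind) (μ.prod P) := by
    apply Integrable.mono' (integrable_const 1) hmind.aestronglyMeasurable
    filter_upwards with p
    simp only [Function.uncurry, Real.norm_eq_abs, hind]
    split_ifs <;> simp
  have hprod_F : Integrable (Function.uncurry (fun y ω => e y ω - ind y ω)) (μ.prod P) := by
    have := hprod_e.sub hprod_ind
    exact this
  -- pointwise-in-y integrability over P
  have hPe : ∀ y : ℝ, Integrable (fun ω => e y ω) P := by
    intro y
    apply Integrable.mono' (integrable_const 1)
      (Real.measurable_exp.comp ((hV.const_mul _).neg)).aestronglyMeasurable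
    filter_upwards with ω using hbound_e (y, ω)
  have hPind : ∀ y : ℝ, Integrable (fun ω => ind y ω) P := by
    intro y
    apply Integrable.mono' (integrable_const 1)
      (Measurable.ite (measurableSet_lt hV measurable_const)
        measurable_const measurable_const).aestronglyMeasurable
    filter_upwards with ω
    simp only [Real.norm_eq_abs, hind]
    split_ifs <;> simp
  -- P{V < e^{-y}} as an integral
  have hPtoReal : ∀ y : ℝ, (P {ω | V ω < Real.exp (-y)}).toReal = ∫ ω, ind y ω ∂P := by
    intro y
    rw [← measureReal_def, ← integral_indicator_one (measurableSet_lt hV measurable_const)]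
    apply integral_congr_ae
    filter_upwards with ω
    simp [Set.indicator_apply, hind]
  -- express f₁ x - f₂ x
  have step1 : f₁ x - f₂ x = ∫ y, (∫ ω, (e y ω - ind y ω) ∂P) ∂μ := by
    rw [hf₁, hf₂, intervalIntegral.integral_of_le hx.le, intervalIntegral.integral_of_le hx.le]
    have h1 : (∫ y in Set.Ioc (0:ℝ) x, (P {ω | V ω < Real.exp (-y)}).toReal)
        = ∫ y, (∫ ω, ind y ω ∂P) ∂μ := by
      rw [hμ]; exact integral_congr_ae (Filter.Eventually.of_forall (fun y => hPtoReal y))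
    have hmarg_e : Integrable (fun y => ∫ ω, e y ω ∂P) μ := by
      simpa [Function.uncurry] using hprod_e.integral_prod_left
    have hmarg_ind : Integrable (fun y => ∫ ω, ind y ω ∂P) μ := by
      simpa [Function.uncurry] using hprod_ind.integral_prod_left
    rw [h1, ← integral_sub hmarg_e hmarg_ind]
    apply integral_congr_ae
    filter_upwards with y
    exact (integral_sub (hPe y) (hPind y)).symm
  -- swap
  have step2 : (∫ y, (∫ ω, (e y ω - ind y ω) ∂P) ∂μ)
      = ∫ ω, (∫ y, (e y ω - ind y ω) ∂μ) ∂P :=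
    integral_integral_swap hprod_F
  -- per-ω evaluation and bounds
  have hJ : ∀ ω, (∫ y, (e y ω - ind y ω) ∂μ)
      = ∫ y in (0:ℝ)..x, (Real.exp (-(Real.exp y * V ω)) - if V ω < Real.exp (-y) then 1 else 0) := by
    intro ω
    rw [intervalIntegral.integral_of_le hx.le, hμ]
  have hIntJ : Integrable (fun ω => ∫ y, (e y ω - ind y ω) ∂μ) P :=
    hprod_F.integral_prod_right
  set I1 := ∫ t in (0:ℝ)..1, (1 - Real.exp (-t)) / t with hI1
  set I2 := ∫ t in Set.Ioi (1:ℝ), Real.exp (-t) / t with hI2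
  have hlow : ∀ ω, -I1 ≤ ∫ y, (e y ω - ind y ω) ∂μ := by
    intro ω
    rw [hJ ω]
    exact (keyD (hV01 ω).1 (hV01 ω).2 hx).1
  have hhigh : ∀ ω, (∫ y, (e y ω - ind y ω) ∂μ) ≤ I2 := by
    intro ω
    rw [hJ ω]
    exact (keyD (hV01 ω).1 (hV01 ω).2 hx).2
  rw [step1, step2]
  constructor
  · calc -I1 = ∫ _ω, -I1 ∂P := by simp
    _ ≤ _ := integral_mono (integrable_const _) hIntJ hlow
  · calc _ ≤ ∫ _ω, I2 ∂P := integral_mono hIntJ (integrable_const _) hhigh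
    _ = I2 := by simp
end

section
/- Let ν be a Lévy measure on (0,∞) of a driftless subordinator, i.e., a measure with ∫ min(x,1) ν(dx) < ∞, and define Φ(t) = ∫ (1 - exp(-t(1-e^{-x}))) ν(dx) and the Laplace exponent Φ̂(t) = ∫ (1 - e^{-tx}) ν(dx) for t > 0. Then Φ(t)/Φ̂(t) → 1 as t → ∞. -/
open MeasureTheory Filter

lemma aux_one_sub_exp_le (x : ℝ) : 1 - Real.exp (-x) ≤ x := by
  have := Real.add_one_le_exp (-x); linarith

lemma aux_exp_neg_le (x : ℝ) (hx : 0 ≤ x) : Real.exp (-x) ≤ 1 - x + x ^ 2 := by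
  have h1 : x + 1 ≤ Real.exp x := Real.add_one_le_exp x
  have h2 : (0:ℝ) < 1 + x := by linarith
  have h4 : Real.exp (-x) ≤ 1 / (1 + x) := by
    rw [Real.exp_neg, inv_eq_one_div]
    apply one_div_le_one_div_of_le h2 (by linarith)
  have h5 : 1 / (1 + x) ≤ 1 - x + x ^ 2 := by
    rw [div_le_iff₀ h2]; nlinarith
  linarith

lemma aux_u_le (u : ℝ) (h0 : 0 ≤ u) (h1 : u ≤ 1) : u ≤ 3 * (1 - Real.exp (-u)) := by
  have h2 : Real.exp (-u) * u ≤ 1 - Real.exp (-u) := by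
    have h := Real.add_one_le_exp u
    have h3 : Real.exp (-u) * (u + 1) ≤ Real.exp (-u) * Real.exp u := by
      apply mul_le_mul_of_nonneg_left h (Real.exp_nonneg _)
    rw [← Real.exp_add] at h3
    simp at h3
    nlinarith [Real.exp_nonneg (-u)]
  have h4 : Real.exp (-1 : ℝ) ≤ Real.exp (-u) := Real.exp_le_exp.2 (by linarith)
  have he : Real.exp (1:ℝ) ≤ 3 := by nlinarith [Real.exp_one_lt_d9]
  have h5 : (1:ℝ)/3 ≤ Real.exp (-1 : ℝ) := by
    rw [Real.exp_neg, inv_eq_one_div]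
    exact one_div_le_one_div_of_le (Real.exp_pos 1) he
  nlinarith [Real.exp_nonneg (-u)]

-- half lower bound on 1 - exp(-x) for x ≤ 1/2
lemma aux_half_le (x : ℝ) (h0 : 0 ≤ x) (h1 : x ≤ 1/2) : x/2 ≤ 1 - Real.exp (-x) := by
  have := aux_exp_neg_le x h0; nlinarith

-- key pointwise estimate
lemma aux_key {t x δ : ℝ} (ht : 1 ≤ t) (hx : 0 < x) (hδ : 0 < δ) (hδ2 : δ ≤ 1/2) :
    Real.exp (-(t * (1 - Real.exp (-x)))) - Real.exp (-(t * x)) ≤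
      (if x < δ then 4 * δ * (1 - Real.exp (-(t * x)))
       else Real.exp (-(t * (1 - Real.exp (-δ))))) := by
  have ht0 : (0:ℝ) < t := by linarith
  set g : ℝ := 1 - Real.exp (-x) with hg
  have hgx : g ≤ x := aux_one_sub_exp_le x
  have hg0 : 0 ≤ g := by
    have : Real.exp (-x) ≤ Real.exp 0 := Real.exp_le_exp.2 (by linarith)
    simp at this; simp [hg]; linarith
  by_cases hcase : x < δ
  · rw [if_pos hcase]
    -- split identity bound: exp(-(t g)) - exp(-(t x)) ≤ exp(-(t g)) * (t (x - g))
    have hiden : Real.exp (-(t * g)) - Real.exp (-(t * x)) ≤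
        Real.exp (-(t * g)) * (t * (x - g)) := by
      have h1 : Real.exp (-(t * x)) = Real.exp (-(t * g)) * Real.exp (-(t * (x - g))) := by
        rw [← Real.exp_add]; ring_nf
      rw [h1]
      have h2 : 1 - Real.exp (-(t * (x - g))) ≤ t * (x - g) := aux_one_sub_exp_le _
      nlinarith [Real.exp_nonneg (-(t * g))]
    have hxg : x - g ≤ x ^ 2 := by
      have := aux_exp_neg_le x hx.le; simp [hg]; nlinarith
    by_cases hu : t * x ≤ 1
    · -- small u: bound by t x^2 ≤ δ (t x) ≤ 3 δ (1 - exp(-(t x)))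
      have h3 : Real.exp (-(t * g)) - Real.exp (-(t * x)) ≤ t * x ^ 2 := by
        have he1 : Real.exp (-(t * g)) ≤ 1 := by
          rw [← Real.exp_zero]; apply Real.exp_le_exp.2; nlinarith
        nlinarith [Real.exp_nonneg (-(t * g)), mul_nonneg ht0.le (sub_nonneg.2 hgx)]
      have h4 : t * x ^ 2 ≤ δ * (t * x) := by
        nlinarith [mul_le_mul_of_nonneg_left hcase.le (mul_nonneg ht0.le hx.le)]
      have h5 : t * x ≤ 3 * (1 - Real.exp (-(t * x))) :=
        aux_u_le _ (by positivity) hu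
      nlinarith
    · -- large u: exp(-(t g)) ≤ exp(-(t x / 2)), and u exp(-u/2) ≤ 2
      push_neg at hu
      have hghalf : x / 2 ≤ g := aux_half_le x hx.le (by linarith)
      have h6 : Real.exp (-(t * g)) ≤ Real.exp (-(t * x / 2)) := by
        apply Real.exp_le_exp.2; nlinarith
      have h7 : Real.exp (-(t * x / 2)) * (t * x) ≤ 2 := by
        have := Real.add_one_le_exp (t * x / 2)
        have hpos : (0:ℝ) < Real.exp (t * x / 2) := Real.exp_pos _
        rw [Real.exp_neg, inv_mul_le_iff₀ hpos]
        nlinarith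
      have h8 : Real.exp (-(t * g)) - Real.exp (-(t * x)) ≤
          Real.exp (-(t * x / 2)) * (t * (x - g)) := by
        calc Real.exp (-(t * g)) - Real.exp (-(t * x))
            ≤ Real.exp (-(t * g)) * (t * (x - g)) := hiden
          _ ≤ Real.exp (-(t * x / 2)) * (t * (x - g)) := by
              apply mul_le_mul_of_nonneg_right h6; nlinarith
      have h9 : t * (x - g) ≤ (t * x) * δ := by nlinarith
      have h10 : Real.exp (-(t * x / 2)) * (t * (x - g)) ≤ 2 * δ := by
        calc Real.exp (-(t * x / 2)) * (t * (x - g))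
            ≤ Real.exp (-(t * x / 2)) * ((t * x) * δ) := by
              apply mul_le_mul_of_nonneg_left h9 (Real.exp_nonneg _)
          _ = (Real.exp (-(t * x / 2)) * (t * x)) * δ := by ring
          _ ≤ 2 * δ := by apply mul_le_mul_of_nonneg_right h7 hδ.le
      have h11 : (1:ℝ)/2 ≤ 1 - Real.exp (-(t * x)) := by
        have : Real.exp (-(t * x)) ≤ Real.exp (-1:ℝ) := Real.exp_le_exp.2 (by linarith)
        have he : Real.exp (-1:ℝ) ≤ 1/2 := by
          rw [Real.exp_neg, inv_eq_one_div]
          rw [div_le_div_iff₀ (Real.exp_pos 1) (by norm_num)]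
          nlinarith [Real.add_one_le_exp (1:ℝ)]
        linarith
      nlinarith
  · rw [if_neg hcase]
    push_neg at hcase
    have h1 : Real.exp (-δ) ≥ Real.exp (-x) := Real.exp_le_exp.2 (by linarith)
    have : Real.exp (-(t * g)) ≤ Real.exp (-(t * (1 - Real.exp (-δ)))) := by
      apply Real.exp_le_exp.2; simp [hg]; nlinarith
    nlinarith [Real.exp_nonneg (-(t * x))]

/-- For a nonzero Lévy measure `ν` on `(0,∞)` with `∫ min(x,1) ν(dx) < ∞`, with
`Φ(t) = ∫ (1 - exp(-t(1-e^{-x}))) ν(dx)` and `Φ̂(t) = ∫ (1 - e^{-tx}) ν(dx)`,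
one has `Φ(t)/Φ̂(t) → 1` as `t → ∞`. -/
theorem Phi_asymptotic_to_laplace_exponent
    (ν : Measure ℝ) (hν0 : ν (Set.Iic 0) = 0) (hνne : ν ≠ 0)
    (hint : ∫⁻ x, ENNReal.ofReal (min x 1) ∂ν < ⊤)
    (Φ Φhat : ℝ → ℝ)
    (hΦ : ∀ t, Φ t =
      (∫⁻ x, ENNReal.ofReal (1 - Real.exp (-(t * (1 - Real.exp (-x))))) ∂ν).toReal)
    (hΦhat : ∀ t, Φhat t =
      (∫⁻ x, ENNReal.ofReal (1 - Real.exp (-(t * x))) ∂ν).toReal) :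
    Tendsto (fun t => Φ t / Φhat t) atTop (nhds 1) := by
  -- notation
  set L : ℝ → ENNReal := fun t => ∫⁻ x, ENNReal.ofReal (1 - Real.exp (-(t * x))) ∂ν with hL
  set M : ℝ → ENNReal := fun t =>
    ∫⁻ x, ENNReal.ofReal (1 - Real.exp (-(t * (1 - Real.exp (-x))))) ∂ν with hM
  set D : ℝ → ENNReal := fun t =>
    ∫⁻ x, ENNReal.ofReal
      (Real.exp (-(t * (1 - Real.exp (-x)))) - Real.exp (-(t * x))) ∂ν with hD
  have h_ae : ∀ᵐ x ∂ν, 0 < x := by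
    rw [ae_iff]
    convert hν0 using 2
    ext x; simp [not_lt]
  have mL : ∀ t : ℝ, Measurable fun x : ℝ => ENNReal.ofReal (1 - Real.exp (-(t * x))) :=
    fun t => ENNReal.measurable_ofReal.comp (by fun_prop)
  have mD : ∀ t : ℝ, Measurable fun x : ℝ =>
      ENNReal.ofReal (Real.exp (-(t * (1 - Real.exp (-x)))) - Real.exp (-(t * x))) :=
    fun t => ENNReal.measurable_ofReal.comp (by fun_prop)
  -- finiteness of L
  have hLfin : ∀ t : ℝ, 1 ≤ t → L t < ⊤ := by
    intro t ht
    have hb : L t ≤ ENNReal.ofReal t * ∫⁻ x, ENNReal.ofReal (min x 1) ∂ν := by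
      rw [← lintegral_const_mul' _ _ ENNReal.ofReal_ne_top]
      apply lintegral_mono_ae
      filter_upwards [h_ae] with x hx
      rw [← ENNReal.ofReal_mul (by linarith)]
      apply ENNReal.ofReal_le_ofReal
      rcases le_or_gt x 1 with h1 | h1
      · have := Real.add_one_le_exp (-(t * x))
        rw [min_eq_left h1]; nlinarith [Real.exp_nonneg (-(t*x))]
      · rw [min_eq_right h1.le]
        have : Real.exp (-(t*x)) > 0 := Real.exp_pos _
        nlinarith
    exact lt_of_le_of_lt hb (ENNReal.mul_lt_top ENNReal.ofReal_lt_top hint)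
  -- monotonicity of L
  have hLmono : ∀ s t : ℝ, 0 ≤ s → s ≤ t → L s ≤ L t := by
    intro s t hs hst
    apply lintegral_mono_ae
    filter_upwards [h_ae] with x hx
    apply ENNReal.ofReal_le_ofReal
    have : Real.exp (-(t * x)) ≤ Real.exp (-(s * x)) := by
      apply Real.exp_le_exp.2; nlinarith
    linarith
  -- positivity of L 1
  have hIoi : 0 < ν (Set.Ioi 0) := by
    have huniv : ν Set.univ ≠ 0 := by
      simpa using (Measure.measure_univ_ne_zero).2 hνne
    have : ν Set.univ ≤ ν (Set.Iic 0) + ν (Set.Ioi 0) := by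
      rw [← Set.Iic_union_Ioi (a := (0:ℝ))]; exact measure_union_le _ _
    rw [hν0, zero_add] at this
    exact lt_of_lt_of_le (pos_iff_ne_zero.2 huniv) this
  have hLpos : 0 < L 1 := by
    rw [hL]
    rw [lintegral_pos_iff_support (mL 1)]
    apply lt_of_lt_of_le hIoi
    apply measure_mono
    intro x hx
    simp only [Function.mem_support, ne_eq, ENNReal.ofReal_eq_zero, not_le]
    have : Real.exp (-(1 * x)) < 1 := by
      rw [← Real.exp_zero]; apply Real.exp_lt_exp.2; simp at hx ⊢; linarith
    linarith
  -- M ≤ L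
  have hML : ∀ t : ℝ, 0 ≤ t → M t ≤ L t := by
    intro t ht
    apply lintegral_mono
    intro x
    apply ENNReal.ofReal_le_ofReal
    have hg := aux_one_sub_exp_le x
    have : Real.exp (-(t * x)) ≤ Real.exp (-(t * (1 - Real.exp (-x)))) := by
      apply Real.exp_le_exp.2; nlinarith
    linarith
  -- L ≤ M + D
  have hLMD : ∀ t : ℝ, L t ≤ M t + D t := by
    intro t
    have : L t ≤ ∫⁻ x, (ENNReal.ofReal (1 - Real.exp (-(t * (1 - Real.exp (-x))))) +
        ENNReal.ofReal
          (Real.exp (-(t * (1 - Real.exp (-x)))) - Real.exp (-(t * x)))) ∂ν := by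
      apply lintegral_mono
      intro x
      have h1 : (1 : ℝ) - Real.exp (-(t * x)) =
          (1 - Real.exp (-(t * (1 - Real.exp (-x))))) +
          (Real.exp (-(t * (1 - Real.exp (-x)))) - Real.exp (-(t * x))) := by ring
      dsimp only
      rw [h1]
      exact ENNReal.ofReal_add_le
    rwa [lintegral_add_right _ (mD t)] at this
  -- tail measure finite
  have hνS : ∀ δ : ℝ, 0 < δ → δ ≤ 1/2 → ν {x | δ ≤ x} < ⊤ := by
    intro δ hδ hδ2
    have hmeas : Measurable fun x : ℝ => ENNReal.ofReal (min x 1) :=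
      ENNReal.measurable_ofReal.comp (measurable_id.min measurable_const)
    have hkey := mul_meas_ge_le_lintegral₀ (μ := ν) hmeas.aemeasurable (ENNReal.ofReal δ)
    have hsub : {x : ℝ | δ ≤ x} ⊆ {x : ℝ | ENNReal.ofReal δ ≤ ENNReal.ofReal (min x 1)} := by
      intro x hx
      simp only [Set.mem_setOf_eq] at *
      exact ENNReal.ofReal_le_ofReal (le_min hx (by linarith))
    have h2 : ENNReal.ofReal δ * ν {x | δ ≤ x} ≤ ∫⁻ x, ENNReal.ofReal (min x 1) ∂ν :=
      le_trans (mul_le_mul_right (measure_mono hsub) _) hkey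
    by_contra h
    push_neg at h
    rw [top_le_iff.1 h, ENNReal.mul_top (by simpa using hδ)] at h2
    exact (lt_irrefl ⊤ (lt_of_le_of_lt h2 hint)).elim
  -- main bound on D
  have hDb : ∀ δ : ℝ, 0 < δ → δ ≤ 1/2 → ∀ t : ℝ, 1 ≤ t →
      D t ≤ ENNReal.ofReal (4 * δ) * L t +
        ν {x | δ ≤ x} * ENNReal.ofReal (Real.exp (-(t * (1 - Real.exp (-δ))))) := by
    intro δ hδ hδ2 t ht
    have hSmeas : MeasurableSet {x : ℝ | δ ≤ x} := measurableSet_Ici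
    have hstep : D t ≤ ∫⁻ x, (ENNReal.ofReal (4 * δ * (1 - Real.exp (-(t * x)))) +
        Set.indicator {x : ℝ | δ ≤ x}
          (fun _ => ENNReal.ofReal (Real.exp (-(t * (1 - Real.exp (-δ)))))) x) ∂ν := by
      apply lintegral_mono_ae
      filter_upwards [h_ae] with x hx
      have hkey := aux_key ht hx hδ hδ2
      by_cases hc : x < δ
      · rw [if_pos hc] at hkey
        exact le_trans (ENNReal.ofReal_le_ofReal hkey) le_self_add
      · rw [if_neg hc] at hkey
        push_neg at hc
        have hi : Set.indicator {x : ℝ | δ ≤ x}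
            (fun _ => ENNReal.ofReal (Real.exp (-(t * (1 - Real.exp (-δ)))))) x =
            ENNReal.ofReal (Real.exp (-(t * (1 - Real.exp (-δ))))) :=
          Set.indicator_of_mem hc _
        rw [hi]
        exact le_trans (ENNReal.ofReal_le_ofReal hkey) le_add_self
    have hindmeas : Measurable (Set.indicator {x : ℝ | δ ≤ x}
        (fun _ : ℝ => ENNReal.ofReal (Real.exp (-(t * (1 - Real.exp (-δ))))))) :=
      measurable_const.indicator hSmeas
    rw [lintegral_add_right _ hindmeas, lintegral_indicator hSmeas,
      setLIntegral_const] at hstep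
    have hfirst : ∫⁻ x, ENNReal.ofReal (4 * δ * (1 - Real.exp (-(t * x)))) ∂ν =
        ENNReal.ofReal (4 * δ) * L t := by
      rw [hL]
      dsimp only
      rw [← lintegral_const_mul' _ _ ENNReal.ofReal_ne_top]
      congr 1
      ext x
      rw [← ENNReal.ofReal_mul (by positivity)]
    rw [hfirst, mul_comm (ENNReal.ofReal (Real.exp (-(t * (1 - Real.exp (-δ))))))] at hstep
    exact hstep
  -- finiteness of D and M
  have hDfin : ∀ t : ℝ, 1 ≤ t → D t < ⊤ := by
    intro t ht
    refine lt_of_le_of_lt (hDb (1/2) (by norm_num) le_rfl t ht) ?_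
    exact ENNReal.add_lt_top.2 ⟨ENNReal.mul_lt_top ENNReal.ofReal_lt_top (hLfin t ht),
      ENNReal.mul_lt_top (hνS (1/2) (by norm_num) le_rfl) ENNReal.ofReal_lt_top⟩
  have hMfin : ∀ t : ℝ, 1 ≤ t → M t < ⊤ := fun t ht =>
    lt_of_le_of_lt (hML t (by linarith)) (hLfin t ht)
  set c : ℝ := (L 1).toReal with hc
  have hcpos : 0 < c := ENNReal.toReal_pos hLpos.ne' (hLfin 1 le_rfl).ne
  have hcleL : ∀ t : ℝ, 1 ≤ t → c ≤ (L t).toReal := fun t ht =>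
    ENNReal.toReal_mono (hLfin t ht).ne (hLmono 1 t one_pos.le ht)
  have hLtpos : ∀ t : ℝ, 1 ≤ t → 0 < (L t).toReal := fun t ht =>
    lt_of_lt_of_le hcpos (hcleL t ht)
  set r : ℝ → ℝ := fun t => (D t).toReal / (L t).toReal with hr
  -- tendsto of r to 0
  have hr0 : Tendsto r atTop (nhds 0) := by
    rw [NormedAddCommGroup.tendsto_nhds_zero]
    intro ε hε
    set δ : ℝ := min (ε/16) (1/2) with hδdef
    have hδpos : 0 < δ := lt_min (by linarith) (by norm_num)
    have hδ2 : δ ≤ 1/2 := min_le_right _ _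
    have hδε : 4 * δ ≤ ε/4 := by
      have : δ ≤ ε/16 := min_le_left _ _
      linarith
    set K : ℝ := (ν {x | δ ≤ x}).toReal with hK
    have hKnn : 0 ≤ K := ENNReal.toReal_nonneg
    have hgδ : 0 < 1 - Real.exp (-δ) := by
      have := aux_exp_neg_le δ hδpos.le
      nlinarith
    have htail : Tendsto (fun t : ℝ =>
        K * Real.exp (-(t * (1 - Real.exp (-δ)))) / c) atTop (nhds 0) := by
      have h1 : Tendsto (fun t : ℝ => -(t * (1 - Real.exp (-δ)))) atTop atBot :=
        tendsto_neg_atTop_atBot.comp (tendsto_id.atTop_mul_const hgδ)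
      have h2 : Tendsto (fun t : ℝ => Real.exp (-(t * (1 - Real.exp (-δ)))))
          atTop (nhds 0) := Real.tendsto_exp_atBot.comp h1
      have h3 := (h2.const_mul K).div_const c
      simpa using h3
    have hev : ∀ᶠ t in atTop, K * Real.exp (-(t * (1 - Real.exp (-δ)))) / c < ε/2 :=
      htail.eventually_lt_const (by linarith)
    filter_upwards [hev, eventually_ge_atTop (1:ℝ)] with t hsm ht
    have hLr := hLtpos t ht
    have hrnn : 0 ≤ r t := div_nonneg ENNReal.toReal_nonneg ENNReal.toReal_nonneg
    rw [Real.norm_eq_abs, abs_of_nonneg hrnn]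
    -- bound on (D t).toReal
    have hb := hDb δ hδpos hδ2 t ht
    have hA : ENNReal.ofReal (4*δ) * L t ≠ ⊤ :=
      (ENNReal.mul_lt_top ENNReal.ofReal_lt_top (hLfin t ht)).ne
    have hB : ν {x | δ ≤ x} * ENNReal.ofReal (Real.exp (-(t * (1 - Real.exp (-δ))))) ≠ ⊤ :=
      (ENNReal.mul_lt_top (hνS δ hδpos hδ2) ENNReal.ofReal_lt_top).ne
    have hDr : (D t).toReal ≤ 4*δ * (L t).toReal +
        K * Real.exp (-(t * (1 - Real.exp (-δ)))) := by
      have h4 := ENNReal.toReal_mono (ENNReal.add_ne_top.2 ⟨hA, hB⟩) hb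
      rw [ENNReal.toReal_add hA hB, ENNReal.toReal_mul, ENNReal.toReal_mul,
        ENNReal.toReal_ofReal (by positivity), ENNReal.toReal_ofReal (Real.exp_nonneg _)]
          at h4
      exact h4
    have hstep1 : r t ≤ 4*δ + K * Real.exp (-(t * (1 - Real.exp (-δ)))) / (L t).toReal := by
      rw [hr]
      rw [div_le_iff₀ hLr]
      have hnn : 0 ≤ K * Real.exp (-(t * (1 - Real.exp (-δ)))) / (L t).toReal :=
        div_nonneg (by positivity) hLr.le
      have : K * Real.exp (-(t * (1 - Real.exp (-δ)))) / (L t).toReal * (L t).toReal =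
          K * Real.exp (-(t * (1 - Real.exp (-δ)))) := by
        field_simp
      nlinarith [hDr]
    have hstep2 : K * Real.exp (-(t * (1 - Real.exp (-δ)))) / (L t).toReal ≤
        K * Real.exp (-(t * (1 - Real.exp (-δ)))) / c := by
      apply div_le_div_of_nonneg_left (by positivity) hcpos (hcleL t ht)
    calc r t ≤ 4*δ + K * Real.exp (-(t * (1 - Real.exp (-δ)))) / (L t).toReal := hstep1
      _ ≤ 4*δ + K * Real.exp (-(t * (1 - Real.exp (-δ)))) / c := by linarith
      _ < ε/4 + ε/2 := by linarith
      _ < ε := by linarith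
  -- squeeze
  have hlow : Tendsto (fun t => 1 - r t) atTop (nhds 1) := by
    have := tendsto_const_nhds (x := (1:ℝ)) (f := atTop (α := ℝ))
    simpa using this.sub hr0
  apply tendsto_of_tendsto_of_tendsto_of_le_of_le' hlow tendsto_const_nhds
  · -- lower bound
    filter_upwards [eventually_ge_atTop (1:ℝ)] with t ht
    have hLr := hLtpos t ht
    have hLle : (L t).toReal ≤ (M t).toReal + (D t).toReal := by
      have h4 := ENNReal.toReal_mono
        (by simp [(hMfin t ht).ne, (hDfin t ht).ne] : M t + D t ≠ ⊤) (hLMD t)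
      rwa [ENNReal.toReal_add (hMfin t ht).ne (hDfin t ht).ne] at h4
    rw [hΦ, hΦhat]
    have h5 : (1 : ℝ) - r t = ((L t).toReal - (D t).toReal) / (L t).toReal := by
      rw [hr, sub_div, div_self hLr.ne']
    rw [h5]
    exact (div_le_div_iff_of_pos_right hLr).2 (by linarith)
  · -- upper bound
    filter_upwards [eventually_ge_atTop (1:ℝ)] with t ht
    rw [hΦ, hΦhat]
    rw [div_le_one (hLtpos t ht)]
    exact ENNReal.toReal_mono (hLfin t ht).ne (hML t (by linarith))
end

section
/- Let Φ : (0,∞) → (0,∞) be differentiable with t ↦ tΦ'(t) nondecreasing, and suppose φ(t) := Φ(e^t) belongs to de Haan's class Γ with auxiliary function h. Then the functions t ↦ Φ(t), t ↦ h(log t), and t ↦ tΦ'(t) are all slowly varying at infinity, and moreover tΦ'(t) ∼ Φ(t)/h(log t) as t → ∞. -/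
open Filter

/-- A positive function `L` is slowly varying at `∞` if `L(λt)/L(t) → 1` for every `λ > 0`. -/
def SlowlyVaryingAtTop (L : ℝ → ℝ) : Prop :=
  ∀ l > 0, Tendsto (fun t => L (l * t) / L t) atTop (nhds 1)

/-- If `Φ` is differentiable with `t ↦ tΦ'(t)` nondecreasing and `φ(t) = Φ(eᵗ)` belongs
to de Haan's class `Γ` with auxiliary function `h`, then `Φ(t)`, `h(log t)` and `tΦ'(t)`
are slowly varying at `∞`, and `tΦ'(t) ∼ Φ(t)/h(log t)` as `t → ∞`. -/
theorem slow_variation_from_deHaan_Gamma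
    (Φ : ℝ → ℝ) (hΦpos : ∀ t > 0, 0 < Φ t) (hΦdiff : Differentiable ℝ Φ)
    (hmono : Monotone (fun t => t * deriv Φ t))
    (φ : ℝ → ℝ) (hφ : ∀ t, φ t = Φ (Real.exp t))
    (h : ℝ → ℝ) (hpos : ∀ t, 0 < h t)
    (hΓ : ∀ u : ℝ, Tendsto (fun t => φ (t - u * h t) / φ t) atTop (nhds (Real.exp (-u))))
    (hinf : Tendsto h atTop atTop) :
    SlowlyVaryingAtTop Φ ∧
    SlowlyVaryingAtTop (fun t => h (Real.log t)) ∧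
    SlowlyVaryingAtTop (fun t => t * deriv Φ t) ∧
    Tendsto (fun t => (t * deriv Φ t) / (Φ t / h (Real.log t))) atTop (nhds 1) := by
  -- positivity of φ
  have hφpos : ∀ t, 0 < φ t := fun t => (hφ t) ▸ hΦpos _ (Real.exp_pos t)
  -- derivative of φ
  have hφdiff : ∀ t, HasDerivAt φ (Real.exp t * deriv Φ (Real.exp t)) t := by
    intro t
    have h1 : HasDerivAt Φ (deriv Φ (Real.exp t)) (Real.exp t) :=
      (hΦdiff (Real.exp t)).hasDerivAt
    have h2 := Real.hasDerivAt_exp t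
    have h3 := h1.comp t h2
    have hfun : φ = Φ ∘ Real.exp := funext fun s => hφ s
    rw [hfun]
    simpa [mul_comm] using h3
  have hderiv : ∀ t, deriv φ t = Real.exp t * deriv Φ (Real.exp t) := fun t => (hφdiff t).deriv
  have hφd : ∀ x, HasDerivAt φ (deriv φ x) x := fun x => (hφdiff x).differentiableAt.hasDerivAt
  -- deriv φ is monotone
  have hmono' : Monotone (deriv φ) := by
    intro a b hab
    rw [hderiv a, hderiv b]
    exact hmono (Real.exp_le_exp.2 hab)
  -- MVT + monotonicity: convexity slope bounds
  have hslope : ∀ a b : ℝ, a < b →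
      deriv φ a * (b - a) ≤ φ b - φ a ∧ φ b - φ a ≤ deriv φ b * (b - a) := by
    intro a b hab
    obtain ⟨c, hc, hceq⟩ := exists_hasDerivAt_eq_slope φ (deriv φ) hab
      (fun x _ => (hφdiff x).differentiableAt.continuousAt.continuousWithinAt)
      (fun x _ => hφd x)
    have hba : 0 < b - a := by linarith
    have heq : φ b - φ a = deriv φ c * (b - a) := by
      field_simp at hceq
      linarith [hceq]
    constructor
    · rw [heq]
      exact mul_le_mul_of_nonneg_right (hmono' hc.1.le) hba.le
    · rw [heq]
      exact mul_le_mul_of_nonneg_right (hmono' hc.2.le) hba.le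
  -- Γ limit in the "+" direction
  have hΓ' : ∀ u : ℝ, Tendsto (fun t => φ (t + u * h t) / φ t) atTop (nhds (Real.exp u)) := by
    intro u
    have := hΓ (-u)
    simpa [neg_mul, sub_neg_eq_add] using this
  -- sandwich inequalities, valid for every t and u > 0
  have hsand : ∀ u : ℝ, 0 < u → ∀ t : ℝ,
      (1 - φ (t - u * h t) / φ t) / u ≤ h t * deriv φ t / φ t ∧
      h t * deriv φ t / φ t ≤ (φ (t + u * h t) / φ t - 1) / u := by
    intro u hu t
    have hht := hpos t
    have hφt := hφpos t
    have hH : 0 < u * h t := mul_pos hu hht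
    constructor
    · obtain ⟨_, key⟩ := hslope (t - u * h t) t (by linarith)
      rw [show t - (t - u * h t) = u * h t by ring] at key
      rw [div_le_div_iff₀ hu hφt]
      have e : (1 - φ (t - u * h t) / φ t) * φ t = φ t - φ (t - u * h t) := by
        field_simp
      have e2 : deriv φ t * (u * h t) = h t * deriv φ t * u := by ring
      rw [e]; linarith
    · obtain ⟨key, _⟩ := hslope t (t + u * h t) (by linarith)
      rw [show t + u * h t - t = u * h t by ring] at key
      rw [div_le_div_iff₀ hφt hu]
      have e : (φ (t + u * h t) / φ t - 1) * φ t = φ (t + u * h t) - φ t := by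
        field_simp
      have e2 : deriv φ t * (u * h t) = h t * deriv φ t * u := by ring
      rw [e]; linarith
  -- Key lemma A : h * φ' / φ → 1
  have hA : Tendsto (fun t => h t * deriv φ t / φ t) atTop (nhds 1) := by
    rw [Metric.tendsto_nhds]
    intro ε hε
    set u := Real.log (1 + ε / 2) with hudef
    have hu0 : 0 < u := Real.log_pos (by linarith)
    have heu : Real.exp u = 1 + ε / 2 := Real.exp_log (by linarith)
    have hmul : Real.exp (-u) * Real.exp u = 1 := by
      rw [← Real.exp_add]; simp
    have hexp1 : Real.exp u - 1 ≤ u * Real.exp u := by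
      nlinarith [Real.add_one_le_exp (-u), Real.exp_pos u]
    have hexp2 : u * Real.exp (-u) ≤ 1 - Real.exp (-u) := by
      nlinarith [Real.add_one_le_exp u, Real.exp_pos (-u)]
    have hexp3 : 1 - ε / 2 ≤ Real.exp (-u) := by
      nlinarith [Real.exp_pos (-u)]
    have hup : ∀ᶠ t in atTop,
        φ (t + u * h t) / φ t < Real.exp u + u * (ε / 4) :=
      (hΓ' u).eventually_lt_const (by nlinarith)
    have hlo : ∀ᶠ t in atTop,
        φ (t - u * h t) / φ t < Real.exp (-u) + u * (ε / 4) :=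
      (hΓ u).eventually_lt_const (by nlinarith [Real.exp_pos (-u)])
    filter_upwards [hup, hlo] with t h1 h2
    obtain ⟨hl, hr⟩ := hsand u hu0 t
    have hl' : 1 - φ (t - u * h t) / φ t ≤ h t * deriv φ t / φ t * u :=
      (div_le_iff₀ hu0).1 hl
    have hr' : h t * deriv φ t / φ t * u ≤ φ (t + u * h t) / φ t - 1 :=
      (le_div_iff₀ hu0).1 hr
    rw [Real.dist_eq, abs_lt]
    constructor
    · -- 1 - ε < F t
      nlinarith [Real.exp_pos (-u)]
    · -- F t < 1 + ε
      nlinarith [Real.exp_pos u]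
  -- Lemma B : φ'/φ → 0
  have hB : Tendsto (fun t => deriv φ t / φ t) atTop (nhds 0) := by
    have := hA.mul hinf.inv_tendsto_atTop
    rw [mul_zero] at this
    refine this.congr fun t => ?_
    have h1 := (hpos t).ne'
    have h2 := (hφpos t).ne'
    field_simp
    rw [Pi.inv_apply, mul_comm (h t), mul_assoc, mul_inv_cancel₀ h1, mul_one]
  -- Lemma C : φ(s+c)/φ(s) → 1 for every fixed c
  have hlogd : ∀ x : ℝ, HasDerivAt (fun y => Real.log (φ y)) (deriv φ x / φ x) x :=
    fun x => (hφd x).log (hφpos x).ne'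
  have hC : ∀ c : ℝ, Tendsto (fun s => φ (s + c) / φ s) atTop (nhds 1) := by
    intro c
    have hlog : Tendsto (fun s => Real.log (φ (s + c)) - Real.log (φ s)) atTop (nhds 0) := by
      rcases eq_or_ne c 0 with rfl | hc
      · simpa using tendsto_const_nhds (α := ℝ) (x := (0 : ℝ)) (f := atTop)
      · rw [Metric.tendsto_nhds]
        intro ε hε
        have hδ : (0 : ℝ) < ε / (|c| + 1) := by positivity
        obtain ⟨T, hT⟩ := eventually_atTop.1
          ((Metric.tendsto_nhds.1 hB) (ε / (|c| + 1)) hδ)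
        filter_upwards [eventually_ge_atTop (max T (T - c))] with s hs
        have hs1 : T ≤ s := le_trans (le_max_left _ _) hs
        have hs2 : T - c ≤ s := le_trans (le_max_right _ _) hs
        have key : ∃ ξ : ℝ, T ≤ ξ ∧
            Real.log (φ (s + c)) - Real.log (φ s) = c * (deriv φ ξ / φ ξ) := by
          rcases hc.lt_or_gt with hneg | hposc
          · obtain ⟨ξ, hξ, hξeq⟩ := exists_hasDerivAt_eq_slope (fun y => Real.log (φ y))
              (fun x => deriv φ x / φ x) (show s + c < s by linarith)
              (fun x _ => (hlogd x).continuousAt.continuousWithinAt)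
              (fun x _ => hlogd x)
            refine ⟨ξ, by linarith [hξ.1], ?_⟩
            rw [hξeq]
            field_simp [hc]
            ring
          · obtain ⟨ξ, hξ, hξeq⟩ := exists_hasDerivAt_eq_slope (fun y => Real.log (φ y))
              (fun x => deriv φ x / φ x) (show s < s + c by linarith)
              (fun x _ => (hlogd x).continuousAt.continuousWithinAt)
              (fun x _ => hlogd x)
            refine ⟨ξ, by linarith [hξ.1], ?_⟩
            rw [hξeq]
            field_simp [hc]
            ring
        obtain ⟨ξ, hξT, hξeq⟩ := key
        have hd := hT ξ hξT
        rw [Real.dist_eq, sub_zero] at hd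
        rw [Real.dist_eq, sub_zero, hξeq, abs_mul]
        calc |c| * |deriv φ ξ / φ ξ| ≤ |c| * (ε / (|c| + 1)) := by
              exact mul_le_mul_of_nonneg_left hd.le (abs_nonneg c)
          _ < ε := by
              rw [mul_div_assoc']
              rw [div_lt_iff₀ (by positivity)]
              nlinarith [abs_nonneg c]
    have := (Real.continuous_exp.tendsto 0).comp hlog
    rw [Real.exp_zero] at this
    refine this.congr fun s => ?_
    simp only [Function.comp]
    rw [Real.exp_sub, Real.exp_log (hφpos _), Real.exp_log (hφpos _)]
  -- Lemma D : φ' eventually positive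
  have hD : ∀ᶠ t in atTop, 0 < deriv φ t := by
    filter_upwards [hA.eventually_const_lt (show (1:ℝ)/2 < 1 by norm_num)] with t ht
    have h1 := hpos t
    have h2 := hφpos t
    have h3 : 0 < h t * deriv φ t := by
      have h4 := mul_pos (show (0:ℝ) < h t * deriv φ t / φ t by linarith) h2
      rwa [div_mul_cancel₀ _ h2.ne'] at h4
    nlinarith [h3, h1]
  -- Lemma E : φ'(s+c)/φ'(s) → 1 for c ≥ 0
  have hE : ∀ c : ℝ, 0 ≤ c → Tendsto (fun s => deriv φ (s + c) / deriv φ s) atTop (nhds 1) := by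
    intro c hc0
    rw [Metric.tendsto_nhds]
    intro ε hε
    set u := Real.log (1 + ε / 2) / 2 with hudef
    have hu0 : 0 < u := by
      have := Real.log_pos (show (1:ℝ) < 1 + ε/2 by linarith)
      positivity
    have he2u : Real.exp (2 * u) = 1 + ε / 2 := by
      rw [show 2 * u = Real.log (1 + ε/2) by rw [hudef]; ring]
      exact Real.exp_log (by linarith)
    have hne : 1 - Real.exp (-u) ≠ 0 := by
      have := Real.exp_lt_one_iff.2 (show -u < 0 by linarith)
      linarith
    have hGlim : Tendsto (fun s => (φ (s + 2 * u * h s) / φ s - φ (s + u * h s) / φ s) /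
        (1 - φ (s - u * h s) / φ s)) atTop
        (nhds ((Real.exp (2 * u) - Real.exp u) / (1 - Real.exp (-u)))) :=
      Tendsto.div ((hΓ' (2 * u)).sub (hΓ' u)) (tendsto_const_nhds.sub (hΓ u)) hne
    have hval : (Real.exp (2 * u) - Real.exp u) / (1 - Real.exp (-u)) = Real.exp (2 * u) := by
      have hnum : Real.exp (2 * u) - Real.exp u = Real.exp (2 * u) * (1 - Real.exp (-u)) := by
        rw [mul_sub, mul_one, ← Real.exp_add, show 2 * u + -u = u by ring]
      rw [hnum, mul_div_assoc, div_self hne, mul_one]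
    rw [hval] at hGlim
    have hGE : ∀ᶠ s in atTop, (φ (s + 2 * u * h s) / φ s - φ (s + u * h s) / φ s) /
        (1 - φ (s - u * h s) / φ s) < 1 + 3 * ε / 4 :=
      hGlim.eventually_lt_const (by rw [he2u]; linarith)
    have hevc : ∀ᶠ s in atTop, c ≤ u * h s :=
      (hinf.const_mul_atTop hu0).eventually_ge_atTop c
    have hevden : ∀ᶠ s in atTop, φ (s - u * h s) / φ s < 1 :=
      (hΓ u).eventually_lt_const (Real.exp_lt_one_iff.2 (by linarith))
    filter_upwards [hGE, hevc, hevden, hD] with s hGs hcs hdens hds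
    have hφs := hφpos s
    have hhs := hpos s
    have hH : 0 < u * h s := mul_pos hu0 hhs
    obtain ⟨slope1, _⟩ := hslope (s + u * h s) (s + 2 * u * h s) (by nlinarith)
    rw [show s + 2 * u * h s - (s + u * h s) = u * h s by ring] at slope1
    obtain ⟨_, slope2⟩ := hslope (s - u * h s) s (by linarith)
    rw [show s - (s - u * h s) = u * h s by ring] at slope2
    set p := (φ (s + 2 * u * h s) - φ (s + u * h s)) / (u * h s) with hpdef
    set q := (φ s - φ (s - u * h s)) / (u * h s) with hqdef
    have hnum_pos : 0 < φ s - φ (s - u * h s) := by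
      have := (div_lt_one hφs).1 hdens
      linarith
    have hqpos : 0 < q := div_pos hnum_pos hH
    have hqle : q ≤ deriv φ s := (div_le_iff₀ hH).2 slope2
    have hdc1 : deriv φ (s + c) ≤ deriv φ (s + u * h s) := hmono' (by linarith)
    have hdc2 : deriv φ (s + u * h s) ≤ p := (le_div_iff₀ hH).2 slope1
    have hds' : deriv φ s ≤ deriv φ (s + c) := hmono' (by linarith)
    have hratio_le : deriv φ (s + c) / deriv φ s ≤ p / q :=
      div_le_div₀ (by linarith) (by linarith) hqpos hqle
    have hpq : p / q = (φ (s + 2 * u * h s) / φ s - φ (s + u * h s) / φ s) /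
        (1 - φ (s - u * h s) / φ s) := by
      rw [hpdef, hqdef]
      have h1 : (u * h s) ≠ 0 := hH.ne'
      have h2 : φ s ≠ 0 := hφs.ne'
      have h3 : φ s - φ (s - u * h s) ≠ 0 := hnum_pos.ne'
      have h4 : 1 - φ (s - u * h s) / φ s ≠ 0 := by
        intro hcon
        apply h3
        field_simp at hcon
        linarith
      field_simp
    have hratio_ge : 1 ≤ deriv φ (s + c) / deriv φ s := (one_le_div hds).2 hds'
    rw [Real.dist_eq, abs_lt]
    constructor
    · linarith
    · have := hratio_le.trans_lt (by rw [hpq] at *; exact hGs)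
      linarith
  -- Lemma E' : all real c
  have hE' : ∀ c : ℝ, Tendsto (fun s => deriv φ (s + c) / deriv φ s) atTop (nhds 1) := by
    intro c
    rcases le_or_gt 0 c with hc | hc
    · exact hE c hc
    · have h1 := hE (-c) (by linarith)
      have h2 : Tendsto (fun s => deriv φ s / deriv φ (s + c)) atTop (nhds 1) := by
        have h3 := h1.comp (tendsto_atTop_add_const_right atTop c tendsto_id)
        refine h3.congr fun s => ?_
        simp only [Function.comp_apply, id_eq]
        rw [show s + c + -c = s by ring]
      have h4 := h2.inv₀ one_ne_zero
      rw [inv_one] at h4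
      exact h4.congr fun s => inv_div _ _
  have hE'' : ∀ c : ℝ, Tendsto (fun s => deriv φ s / deriv φ (s + c)) atTop (nhds 1) := by
    intro c
    have h4 := (hE' c).inv₀ one_ne_zero
    rw [inv_one] at h4
    exact h4.congr fun s => inv_div _ _
  -- Lemma G : h(s+c)/h(s) → 1
  have hG : ∀ c : ℝ, Tendsto (fun s => h (s + c) / h s) atTop (nhds 1) := by
    intro c
    have hshift := tendsto_atTop_add_const_right atTop c (tendsto_id (α := ℝ))
    have hFs : Tendsto (fun s => h (s + c) * deriv φ (s + c) / φ (s + c)) atTop (nhds 1) :=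
      hA.comp hshift
    have hDs : ∀ᶠ s in atTop, 0 < deriv φ (s + c) := hshift.eventually hD
    have T1 : Tendsto (fun s => (h (s + c) * deriv φ (s + c) / φ (s + c)) /
        (h s * deriv φ s / φ s) * (φ (s + c) / φ s) * (deriv φ s / deriv φ (s + c)))
        atTop (nhds 1) := by
      have := ((hFs.div hA one_ne_zero).mul (hC c)).mul (hE'' c)
      simpa using this
    refine T1.congr' ?_
    filter_upwards [hD, hDs] with s hds hdcs
    have h1 := (hpos s).ne'
    have h2 := (hpos (s + c)).ne'
    have h3 := (hφpos s).ne'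
    have h4 := (hφpos (s + c)).ne'
    have h5 := hds.ne'
    have h6 := hdcs.ne'
    field_simp
  -- Final assembly
  have hlog := Real.tendsto_log_atTop
  refine ⟨?_, ?_, ?_, ?_⟩
  · intro l hl
    refine ((hC (Real.log l)).comp hlog).congr' ?_
    filter_upwards [eventually_gt_atTop 0] with t ht
    simp only [Function.comp_apply]
    rw [hφ, hφ, Real.exp_add, Real.exp_log ht, Real.exp_log hl, mul_comm t l]
  · intro l hl
    refine ((hG (Real.log l)).comp hlog).congr' ?_
    filter_upwards [eventually_gt_atTop 0] with t ht
    simp only [Function.comp_apply]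
    rw [Real.log_mul hl.ne' ht.ne', add_comm (Real.log l) (Real.log t)]
  · intro l hl
    refine ((hE' (Real.log l)).comp hlog).congr' ?_
    filter_upwards [eventually_gt_atTop 0] with t ht
    simp only [Function.comp_apply]
    rw [hderiv, hderiv, Real.exp_add, Real.exp_log ht, Real.exp_log hl, mul_comm t l]
  · refine (hA.comp hlog).congr' ?_
    filter_upwards [eventually_gt_atTop 0] with t ht
    simp only [Function.comp_apply]
    rw [hderiv, Real.exp_log ht, hφ, Real.exp_log ht, div_div_eq_mul_div]
    ring
end

section
/- Let ν be an infinite Lévy measure on (0,∞) with ∫ min(x,1) ν(dx) < ∞, and suppose Φ(t) = ∫ (1-exp(-t(1-e^{-x}))) ν(dx) is slowly varying at ∞. Then ν([x,∞)) ∼ Φ(1/x) as x → 0+. -/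
open MeasureTheory Filter

private lemma lemA (l u M : ℝ) (hl0 : 0 < l) (hl1 : l < 1) (hu : 0 ≤ u) (huM : u ≤ M) :
    1 - Real.exp (-(l * u)) ≤ (1 - (1 - l) * Real.exp (-M)) * (1 - Real.exp (-u)) := by
  have h1 : 1 - Real.exp (-u) ≤ u := by nlinarith [Real.add_one_le_exp (-u)]
  have h2 : Real.exp (-M) ≤ Real.exp (-u) := Real.exp_le_exp.2 (by linarith)
  have h3 : Real.exp (-(l*u)) = Real.exp (-u) * Real.exp ((1-l)*u) := by
    rw [← Real.exp_add]; ring_nf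
  have h4 : (1-l)*u + 1 ≤ Real.exp ((1-l)*u) := Real.add_one_le_exp _
  have h5 : 0 ≤ 1 - Real.exp (-u) := by
    have := Real.exp_le_one_iff.2 (by linarith : -u ≤ 0); linarith
  have h6 : (0:ℝ) < Real.exp (-u) := Real.exp_pos _
  have h7 : (0:ℝ) < Real.exp (-M) := Real.exp_pos _
  nlinarith [mul_le_mul_of_nonneg_left h1 (mul_nonneg (by linarith : (0:ℝ) ≤ 1 - l) h7.le),
    mul_le_mul_of_nonneg_left h4 h6.le,
    mul_le_mul_of_nonneg_right h2 (mul_nonneg (by linarith : (0:ℝ) ≤ 1-l) hu)]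

private lemma lemGpos {x : ℝ} (hx : 0 < x) : 0 < 1 - Real.exp (-x) := by
  have := Real.exp_lt_one_iff.2 (by linarith : -x < 0); linarith

private lemma lemGnonneg {x : ℝ} (hx : 0 ≤ x) : 0 ≤ 1 - Real.exp (-x) := by
  have := Real.exp_le_one_iff.2 (by linarith : -x ≤ 0); linarith

private lemma lemGle {x : ℝ} (hx : 0 ≤ x) : 1 - Real.exp (-x) ≤ x := by
  nlinarith [Real.add_one_le_exp (-x)]

private lemma lemGhalf {x : ℝ} (hx : 0 < x) (hx1 : x ≤ 1) : x/2 ≤ 1 - Real.exp (-x) := by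
  have h1 : 1 + x ≤ Real.exp x := by linarith [Real.add_one_le_exp x]
  have h2 : Real.exp (-x) = (Real.exp x)⁻¹ := Real.exp_neg x
  have h3 : (0:ℝ) < Real.exp x := Real.exp_pos x
  have h4 : Real.exp (-x) ≤ (1+x)⁻¹ := by
    rw [h2]; exact inv_anti₀ (by linarith) h1
  have h5 : (1+x)⁻¹ ≤ 1 - x/2 := by
    rw [inv_le_iff_one_le_mul₀ (by linarith)]; nlinarith
  linarith

private lemma lemGmono : Monotone fun x : ℝ => 1 - Real.exp (-x) := by
  intro a b hab
  simp only [sub_le_sub_iff_left, Real.exp_le_exp]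
  linarith

private lemma lemGsm : StrictMono fun x : ℝ => 1 - Real.exp (-x) := by
  intro a b hab
  simp only [sub_lt_sub_iff_left, Real.exp_lt_exp]
  linarith

private lemma lemFle1 (t x : ℝ) : 1 - Real.exp (-(t*(1-Real.exp (-x)))) ≤ 1 := by
  have := (Real.exp_pos (-(t*(1-Real.exp (-x))))).le; linarith

private lemma lemBound {t x : ℝ} (ht : 0 ≤ t) (hx : 0 < x) :
    1 - Real.exp (-(t * (1 - Real.exp (-x)))) ≤ max t 1 * min x 1 := by
  have hg0 : 0 ≤ 1 - Real.exp (-x) := lemGnonneg hx.le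
  have hgx : 1 - Real.exp (-x) ≤ x := lemGle hx.le
  have hFt : 1 - Real.exp (-(t * (1 - Real.exp (-x)))) ≤ t * x := by
    have h := Real.add_one_le_exp (-(t * (1 - Real.exp (-x))))
    nlinarith [mul_le_mul_of_nonneg_left hgx ht]
  rcases le_total x 1 with h | h
  · rw [min_eq_left h]
    calc 1 - Real.exp (-(t * (1 - Real.exp (-x)))) ≤ t * x := hFt
    _ ≤ max t 1 * x := by nlinarith [le_max_left t 1]
  · rw [min_eq_right h]
    calc 1 - Real.exp (-(t * (1 - Real.exp (-x)))) ≤ 1 := lemFle1 t x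
    _ ≤ max t 1 * 1 := by nlinarith [le_max_right t 1]

private lemma lemMono {s t x : ℝ} (hs : 0 ≤ s) (hst : s ≤ t) (hx : 0 < x) :
    1 - Real.exp (-(s * (1 - Real.exp (-x)))) ≤ 1 - Real.exp (-(t * (1 - Real.exp (-x)))) := by
  have hg0 : 0 ≤ 1 - Real.exp (-x) := lemGnonneg hx.le
  have : Real.exp (-(t * (1 - Real.exp (-x)))) ≤ Real.exp (-(s * (1 - Real.exp (-x)))) :=
    Real.exp_le_exp.2 (by nlinarith)
  linarith

set_option maxHeartbeats 2000000 in
/-- Karamata-type consequence -/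
theorem tail_asymptotic_Phi
    (ν : Measure ℝ) (hν0 : ν (Set.Iic 0) = 0) (hνinf : ν Set.univ = ⊤)
    (hint : ∫⁻ x, ENNReal.ofReal (min x 1) ∂ν < ⊤)
    (Φ : ℝ → ℝ)
    (hΦ : ∀ t, Φ t =
      (∫⁻ x, ENNReal.ofReal (1 - Real.exp (-(t * (1 - Real.exp (-x))))) ∂ν).toReal)
    (hsv : ∀ l > 0, Tendsto (fun t => Φ (l * t) / Φ t) atTop (nhds 1)) :
    Tendsto (fun x => (ν (Set.Ici x)).toReal / Φ (1 / x)) (nhdsWithin 0 (Set.Ioi 0))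
      (nhds 1) := by
  set L : ℝ → ENNReal :=
    fun t => ∫⁻ x, ENNReal.ofReal (1 - Real.exp (-(t * (1 - Real.exp (-x))))) ∂ν with hLdef
  have hae : ∀ᵐ x ∂ν, 0 < x := by
    rw [ae_iff]
    have : {a : ℝ | ¬ 0 < a} = Set.Iic 0 := by ext a; simp
    rw [this]; exact hν0
  have hmeasF : ∀ t : ℝ, Measurable fun x : ℝ =>
      ENNReal.ofReal (1 - Real.exp (-(t * (1 - Real.exp (-x))))) := by
    intro t; fun_prop
  have hLfin : ∀ t : ℝ, 0 ≤ t → L t ≠ ⊤ := by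
    intro t ht
    have h1 : L t ≤ ∫⁻ x, ENNReal.ofReal (max t 1) * ENNReal.ofReal (min x 1) ∂ν := by
      apply lintegral_mono_ae
      filter_upwards [hae] with x hx
      rw [← ENNReal.ofReal_mul (le_trans zero_le_one (le_max_right t 1))]
      exact ENNReal.ofReal_le_ofReal (lemBound ht hx)
    rw [lintegral_const_mul _ (by fun_prop : Measurable fun x : ℝ => ENNReal.ofReal (min x 1))] at h1
    exact ne_top_of_le_ne_top (ENNReal.mul_ne_top ENNReal.ofReal_ne_top hint.ne) h1
  have hΦmono : ∀ s t : ℝ, 0 ≤ s → s ≤ t → Φ s ≤ Φ t := by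
    intro s t hs hst
    rw [hΦ, hΦ]
    refine ENNReal.toReal_mono (hLfin t (hs.trans hst)) (lintegral_mono_ae ?_)
    filter_upwards [hae] with x hx
    exact ENNReal.ofReal_le_ofReal (lemMono hs hst hx)
  have hΦpos : ∀ t : ℝ, 0 < t → 0 < Φ t := by
    intro t ht
    rw [hΦ]
    refine ENNReal.toReal_pos (fun h0 => ?_) (hLfin t ht.le)
    rw [lintegral_eq_zero_iff (hmeasF t)] at h0
    have hνne : ν ≠ 0 := by intro h; rw [h] at hνinf; simp at hνinf
    haveI : (ae ν).NeBot := ae_neBot.2 hνne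
    obtain ⟨x, hx, h0x⟩ := (hae.and h0).exists
    have h0x' : 1 - Real.exp (-(t * (1 - Real.exp (-x)))) ≤ 0 := by
      have := h0x
      simp only [Pi.zero_apply, ENNReal.ofReal_eq_zero] at this
      exact this
    have hg := lemGpos hx
    have hlt : -(t * (1 - Real.exp (-x))) < 0 := by nlinarith
    have := Real.exp_lt_one_iff.2 hlt
    linarith
  -- Master 1
  have master1 : ∀ t M : ℝ, 0 < t → 0 < M →
      ENNReal.ofReal (1 - Real.exp (-M)) * ν {y : ℝ | M < t * (1 - Real.exp (-y))} ≤ L t := by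
    intro t M ht hM
    have hSmeas : MeasurableSet {y : ℝ | M < t * (1 - Real.exp (-y))} :=
      measurableSet_lt measurable_const (by fun_prop)
    calc ENNReal.ofReal (1 - Real.exp (-M)) * ν {y : ℝ | M < t * (1 - Real.exp (-y))}
        = ∫⁻ _ in {y : ℝ | M < t * (1 - Real.exp (-y))}, ENNReal.ofReal (1 - Real.exp (-M)) ∂ν := by
          rw [setLIntegral_const]
      _ ≤ ∫⁻ x in {y : ℝ | M < t * (1 - Real.exp (-y))},
            ENNReal.ofReal (1 - Real.exp (-(t * (1 - Real.exp (-x))))) ∂ν := by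
          apply lintegral_mono_ae
          rw [ae_restrict_iff' hSmeas]
          filter_upwards with x hx
          refine ENNReal.ofReal_le_ofReal ?_
          have : Real.exp (-(t * (1 - Real.exp (-x)))) ≤ Real.exp (-M) :=
            Real.exp_le_exp.2 (by have hx' : M < t * (1 - Real.exp (-x)) := hx; linarith)
          linarith
      _ ≤ L t := setLIntegral_le_lintegral _ _
  -- finiteness of tails
  have hνS_fin : ∀ t M : ℝ, 0 < t → 0 < M → ν {y : ℝ | M < t * (1 - Real.exp (-y))} ≠ ⊤ := by
    intro t M ht hM h
    have h1 := master1 t M ht hM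
    rw [h, ENNReal.mul_top (by
      simp only [ne_eq, ENNReal.ofReal_eq_zero, not_le]
      exact lemGpos hM)] at h1
    exact hLfin t ht.le (top_le_iff.1 h1)
  -- Master 2
  have master2 : ∀ t : ℝ, 0 < t →
      Φ t - 2 * Real.exp 1 * (Φ t - Φ ((1/2) * t)) ≤
        (ν {y : ℝ | 1 < t * (1 - Real.exp (-y))}).toReal := by
    intro t ht
    set A : Set ℝ := {y : ℝ | t * (1 - Real.exp (-y)) ≤ 1} with hAdef
    have hA : MeasurableSet A := measurableSet_le (by fun_prop) measurable_const
    have hAc : Aᶜ = {y : ℝ | 1 < t * (1 - Real.exp (-y))} := by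
      ext y; simp [hAdef, not_le]
    set IA := ∫⁻ x in A, ENNReal.ofReal (1 - Real.exp (-(t * (1 - Real.exp (-x))))) ∂ν with hIA
    set IB := ∫⁻ x in Aᶜ, ENNReal.ofReal (1 - Real.exp (-(t * (1 - Real.exp (-x))))) ∂ν with hIB
    have hsum : IA + IB = L t := lintegral_add_compl _ hA
    have hIAfin : IA ≠ ⊤ :=
      ne_top_of_le_ne_top (hLfin t ht.le) (hsum ▸ le_add_right (le_refl IA) : IA ≤ L t)
    have hIBfin : IB ≠ ⊤ :=
      ne_top_of_le_ne_top (hLfin t ht.le) (hsum ▸ le_add_left (le_refl IB) : IB ≤ L t)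
    have hνAc : ν Aᶜ ≠ ⊤ := by rw [hAc]; exact hνS_fin t 1 ht one_pos
    set c : ℝ := 1 - (1 - 1/2) * Real.exp (-1) with hcdef
    have hc0 : 0 ≤ c := by
      have := Real.exp_le_one_iff.2 (by norm_num : (-1:ℝ) ≤ 0)
      rw [hcdef]; nlinarith
    have hstep : L ((1/2) * t) ≤ ENNReal.ofReal c * IA + IB := by
      show (∫⁻ x, ENNReal.ofReal (1 - Real.exp (-((1/2) * t * (1 - Real.exp (-x))))) ∂ν) ≤ _
      rw [← lintegral_add_compl
        (fun x => ENNReal.ofReal (1 - Real.exp (-((1/2) * t * (1 - Real.exp (-x)))))) hA]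
      apply add_le_add
      · rw [← lintegral_const_mul _ (hmeasF t)]
        apply lintegral_mono_ae
        rw [ae_restrict_iff' hA]
        filter_upwards [hae] with x hx hxA
        rw [← ENNReal.ofReal_mul hc0]
        refine ENNReal.ofReal_le_ofReal ?_
        have hg := lemGpos hx
        have hu0 : 0 ≤ t * (1 - Real.exp (-x)) := by positivity
        have hu1 : t * (1 - Real.exp (-x)) ≤ 1 := hxA
        have := lemA (1/2) (t * (1 - Real.exp (-x))) 1 (by norm_num) (by norm_num) hu0 hu1
        calc 1 - Real.exp (-((1/2) * t * (1 - Real.exp (-x))))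
            = 1 - Real.exp (-((1/2) * (t * (1 - Real.exp (-x))))) := by ring_nf
          _ ≤ c * (1 - Real.exp (-(t * (1 - Real.exp (-x))))) := this
      · apply lintegral_mono_ae
        rw [ae_restrict_iff' hA.compl]
        filter_upwards [hae] with x hx _
        exact ENNReal.ofReal_le_ofReal (lemMono (by linarith) (by linarith) hx)
    have hΦt : Φ t = IA.toReal + IB.toReal := by
      rw [hΦ]
      show (L t).toReal = _
      rw [← hsum, ENNReal.toReal_add hIAfin hIBfin]
    have hΦht : Φ ((1/2) * t) ≤ c * IA.toReal + IB.toReal := by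
      rw [hΦ]
      show (L ((1/2)*t)).toReal ≤ _
      calc (L ((1/2)*t)).toReal ≤ (ENNReal.ofReal c * IA + IB).toReal :=
            ENNReal.toReal_mono
              (by exact ENNReal.add_ne_top.2 ⟨ENNReal.mul_ne_top ENNReal.ofReal_ne_top hIAfin, hIBfin⟩)
              hstep
        _ = c * IA.toReal + IB.toReal := by
            rw [ENNReal.toReal_add (ENNReal.mul_ne_top ENNReal.ofReal_ne_top hIAfin) hIBfin,
              ENNReal.toReal_mul, ENNReal.toReal_ofReal hc0]
    have hIBν : IB.toReal ≤ (ν Aᶜ).toReal := by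
      refine ENNReal.toReal_mono hνAc ?_
      calc IB ≤ ∫⁻ _ in Aᶜ, 1 ∂ν := by
            apply lintegral_mono
            intro x
            exact ENNReal.ofReal_le_one.2 (lemFle1 t x)
        _ = ν Aᶜ := by rw [setLIntegral_const, one_mul]
    have hexp : (0:ℝ) < Real.exp 1 := Real.exp_pos 1
    have hexpinv : Real.exp (-1) = (Real.exp 1)⁻¹ := Real.exp_neg 1
    have hIAnn : 0 ≤ IA.toReal := ENNReal.toReal_nonneg
    have hkey : IA.toReal ≤ 2 * Real.exp 1 * (Φ t - Φ ((1/2) * t)) := by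
      have h1 : (1 - c) * IA.toReal ≤ Φ t - Φ ((1/2) * t) := by
        rw [hΦt]; rw [hcdef]; rw [hcdef] at hΦht; nlinarith
      have h2 : 1 - c = (1/2) * Real.exp (-1) := by rw [hcdef]; ring
      rw [h2, hexpinv] at h1
      have := mul_le_mul_of_nonneg_left h1 (by positivity : (0:ℝ) ≤ 2 * Real.exp 1)
      calc IA.toReal = 2 * Real.exp 1 * ((1/2) * (Real.exp 1)⁻¹ * IA.toReal) := by
            field_simp
        _ ≤ 2 * Real.exp 1 * (Φ t - Φ ((1/2) * t)) := this
    rw [← hAc]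
    linarith
  -- x-dependent eventually facts
  have hx1ev : ∀ᶠ x : ℝ in nhdsWithin 0 (Set.Ioi 0), x < 1 :=
    Filter.Eventually.filter_mono nhdsWithin_le_nhds (eventually_lt_nhds one_pos)
  have hIcifin : ∀ x : ℝ, 0 < x → ν (Set.Ici x) ≠ ⊤ := by
    intro x hx
    have hg := lemGpos hx
    have hsub : Set.Ici x ⊆ {y : ℝ | 1 < (2 * (1 - Real.exp (-x))⁻¹) * (1 - Real.exp (-y))} := by
      intro y hy
      have hgy : 1 - Real.exp (-x) ≤ 1 - Real.exp (-y) := lemGmono hy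
      have h2 : (2:ℝ) ≤ (2 * (1 - Real.exp (-x))⁻¹) * (1 - Real.exp (-y)) := by
        calc (2:ℝ) = 2 * (1 - Real.exp (-x))⁻¹ * (1 - Real.exp (-x)) := by field_simp
        _ ≤ _ := mul_le_mul_of_nonneg_left hgy (by positivity)
      show (1:ℝ) < _
      linarith
    intro h
    exact hνS_fin (2 * (1 - Real.exp (-x))⁻¹) 1 (by positivity) one_pos
      (top_le_iff.1 (h ▸ measure_mono hsub))
  have key_lower : ∀ᶠ x in nhdsWithin 0 (Set.Ioi 0),
      Φ (1/x) - 2*Real.exp 1*(Φ (2*(1/x)) - Φ ((1/2)*(1/x))) ≤ (ν (Set.Ici x)).toReal := by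
    filter_upwards [self_mem_nhdsWithin, hx1ev] with x hx hx1
    have hx0 : (0:ℝ) < x := hx
    have hg := lemGpos hx0
    set t := (1 - Real.exp (-x))⁻¹ with htdef
    have ht : 0 < t := by positivity
    have hset : {y : ℝ | 1 < t * (1 - Real.exp (-y))} = Set.Ioi x := by
      ext y
      simp only [Set.mem_setOf_eq, Set.mem_Ioi, htdef]
      constructor
      · intro h
        by_contra hyx
        push_neg at hyx
        have hgy : 1 - Real.exp (-y) ≤ 1 - Real.exp (-x) := lemGmono hyx
        have : (1 - Real.exp (-x))⁻¹ * (1 - Real.exp (-y)) ≤ 1 := by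
          calc (1 - Real.exp (-x))⁻¹ * (1 - Real.exp (-y))
              ≤ (1 - Real.exp (-x))⁻¹ * (1 - Real.exp (-x)) :=
                mul_le_mul_of_nonneg_left hgy (by positivity)
          _ = 1 := by field_simp
        linarith
      · intro h
        have hlt : 1 - Real.exp (-x) < 1 - Real.exp (-y) := lemGsm h
        calc (1:ℝ) = (1 - Real.exp (-x))⁻¹ * (1 - Real.exp (-x)) := by field_simp
        _ < _ := mul_lt_mul_of_pos_left hlt (by positivity)
    have h2 := master2 t ht
    rw [hset] at h2
    have hν1 : (ν (Set.Ioi x)).toReal ≤ (ν (Set.Ici x)).toReal :=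
      ENNReal.toReal_mono (hIcifin x hx0) (measure_mono Set.Ioi_subset_Ici_self)
    have hxle : 1 - Real.exp (-x) ≤ x := lemGle hx0.le
    have hxhalf : x/2 ≤ 1 - Real.exp (-x) := lemGhalf hx0 hx1.le
    have hb0 : (0:ℝ) < 1/x := by positivity
    have ht1 : 1/x ≤ t := by
      rw [htdef, one_div]
      exact inv_anti₀ hg hxle
    have ht2 : t ≤ 2*(1/x) := by
      have h5 : t ≤ (x/2)⁻¹ := inv_anti₀ (by positivity) hxhalf
      have h6 : (x/2)⁻¹ = 2*(1/x) := by field_simp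
      linarith [h6 ▸ h5]
    have ht3 : (1/2)*(1/x) ≤ (1/2)*t := by linarith
    have hb1 : Φ (1/x) ≤ Φ t := hΦmono _ _ hb0.le ht1
    have hb2 : Φ t ≤ Φ (2*(1/x)) := hΦmono _ _ ht.le ht2
    have hb3 : Φ ((1/2)*(1/x)) ≤ Φ ((1/2)*t) := hΦmono _ _ (by positivity) ht3
    have hcmp : 2*Real.exp 1*(Φ t - Φ ((1/2)*t)) ≤
        2*Real.exp 1*(Φ (2*(1/x)) - Φ ((1/2)*(1/x))) :=
      mul_le_mul_of_nonneg_left (by linarith) (by positivity)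
    linarith
  have key_upper : ∀ M : ℝ, 1 ≤ M → ∀ᶠ x in nhdsWithin 0 (Set.Ioi 0),
      (1 - Real.exp (-M)) * (ν (Set.Ici x)).toReal ≤ Φ ((4*M)*(1/x)) := by
    intro M hM
    filter_upwards [self_mem_nhdsWithin, hx1ev] with x hx hx1
    have hx0 : (0:ℝ) < x := hx
    have hg := lemGpos hx0
    have hM0 : (0:ℝ) < M := by linarith
    set t := 2*M*(1 - Real.exp (-x))⁻¹ with htdef
    have ht : 0 < t := by positivity
    have hsub : Set.Ici x ⊆ {y : ℝ | M < t * (1 - Real.exp (-y))} := by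
      intro y hy
      have hgy : 1 - Real.exp (-x) ≤ 1 - Real.exp (-y) := lemGmono hy
      have h2M : 2*M ≤ t * (1 - Real.exp (-y)) := by
        calc 2*M = 2*M*(1 - Real.exp (-x))⁻¹ * (1 - Real.exp (-x)) := by field_simp
        _ ≤ t * (1 - Real.exp (-y)) := mul_le_mul_of_nonneg_left hgy (by positivity)
      show M < t * (1 - Real.exp (-y))
      linarith
    have hm1 := master1 t M ht hM0
    have hfin := hνS_fin t M ht hM0
    have hr : (1 - Real.exp (-M)) * (ν {y : ℝ | M < t * (1 - Real.exp (-y))}).toReal ≤ Φ t := by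
      rw [hΦ]
      show _ ≤ (L t).toReal
      calc (1 - Real.exp (-M)) * (ν {y : ℝ | M < t * (1 - Real.exp (-y))}).toReal
          = (ENNReal.ofReal (1 - Real.exp (-M)) * ν {y : ℝ | M < t * (1 - Real.exp (-y))}).toReal := by
            rw [ENNReal.toReal_mul, ENNReal.toReal_ofReal (lemGpos hM0).le]
        _ ≤ (L t).toReal := ENNReal.toReal_mono (hLfin t ht.le) hm1
    have hν1 : (ν (Set.Ici x)).toReal ≤ (ν {y : ℝ | M < t * (1 - Real.exp (-y))}).toReal :=
      ENNReal.toReal_mono hfin (measure_mono hsub)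
    have ht4 : t ≤ (4*M)*(1/x) := by
      have hxhalf : x/2 ≤ 1 - Real.exp (-x) := lemGhalf hx0 hx1.le
      have h5 : (1 - Real.exp (-x))⁻¹ ≤ (x/2)⁻¹ := inv_anti₀ (by positivity) hxhalf
      have h6 : 2*M*(x/2)⁻¹ = (4*M)*(1/x) := by field_simp; ring
      calc t = 2*M*(1 - Real.exp (-x))⁻¹ := htdef
      _ ≤ 2*M*(x/2)⁻¹ := mul_le_mul_of_nonneg_left h5 (by positivity)
      _ = (4*M)*(1/x) := h6
    have hb : Φ t ≤ Φ ((4*M)*(1/x)) := hΦmono _ _ ht.le ht4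
    have hme : (0:ℝ) ≤ 1 - Real.exp (-M) := (lemGpos hM0).le
    linarith [mul_le_mul_of_nonneg_left hν1 hme]
  -- final assembly
  have htends : Tendsto (fun x : ℝ => 1/x) (nhdsWithin 0 (Set.Ioi 0)) atTop := by
    simpa [one_div] using tendsto_inv_nhdsGT_zero (𝕜 := ℝ)
  have hΦposev : ∀ᶠ x in nhdsWithin 0 (Set.Ioi 0), 0 < Φ (1/x) := by
    filter_upwards [self_mem_nhdsWithin] with x hx
    have hx0 : (0:ℝ) < x := hx
    exact hΦpos _ (by positivity)
  rw [Metric.tendsto_nhds]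
  intro ε hε
  set ε' := min ε 1 with hε'def
  have hε'0 : 0 < ε' := lt_min hε one_pos
  have hε'1 : ε' ≤ 1 := min_le_right _ _
  have hε'ε : ε' ≤ ε := min_le_left _ _
  set M := max 1 (Real.log (8/ε')) with hMdef
  have hM1 : (1:ℝ) ≤ M := le_max_left _ _
  have hMe : Real.exp (-M) ≤ ε'/8 := by
    have h8 : (0:ℝ) < 8/ε' := by positivity
    have h9 : Real.exp (-M) ≤ (8/ε')⁻¹ := by
      rw [← Real.exp_log h8, ← Real.exp_neg]
      exact Real.exp_le_exp.2 (neg_le_neg (le_max_right _ _))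
    calc Real.exp (-M) ≤ (8/ε')⁻¹ := h9
    _ = ε'/8 := by field_simp
  have hexp1 : (0:ℝ) < Real.exp 1 := Real.exp_pos 1
  set δ := ε'/(16*Real.exp 1) with hδdef
  have hδ0 : 0 < δ := by positivity
  have E1 : ∀ᶠ x in nhdsWithin 0 (Set.Ioi 0), Φ ((4*M)*(1/x)) / Φ (1/x) < 1 + ε'/8 := by
    have h := ((hsv (4*M) (by positivity)).comp htends).eventually_lt_const
      (by linarith : (1:ℝ) < 1 + ε'/8)
    simpa [Function.comp] using h
  have E2 : ∀ᶠ x in nhdsWithin 0 (Set.Ioi 0),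
      Φ (2*(1/x)) / Φ (1/x) - Φ ((1/2)*(1/x)) / Φ (1/x) < δ := by
    have h2 := (hsv 2 two_pos).comp htends
    have hh := (hsv (1/2) (by norm_num)).comp htends
    have h0 : Tendsto (fun x => Φ (2*(1/x)) / Φ (1/x) - Φ ((1/2)*(1/x)) / Φ (1/x))
        (nhdsWithin 0 (Set.Ioi 0)) (nhds 0) := by
      have := h2.sub hh
      rw [sub_self] at this
      simpa [Function.comp] using this
    exact h0.eventually_lt_const hδ0
  filter_upwards [hΦposev, E1, E2, key_upper M hM1, key_lower] with x hP h1 h2 h3 h4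
  set Q := Φ (1/x) with hQ
  set R := (ν (Set.Ici x)).toReal with hRdef
  have hR0 : 0 ≤ R := ENNReal.toReal_nonneg
  have hu1 : Φ ((4*M)*(1/x)) < (1 + ε'/8) * Q := (div_lt_iff₀ hP).1 h1
  have hu2 : (1 - Real.exp (-M)) * R ≤ (1 + ε'/8) * Q := le_of_lt (lt_of_le_of_lt h3 hu1)
  have hu3 : R * (1 - ε'/8) ≤ (1 + ε'/8) * Q := by
    linarith [mul_le_mul_of_nonneg_left hMe hR0]
  have hup : R < (1 + ε) * Q := by nlinarith [mul_pos hP hε]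
  have hl1 : Φ (2*(1/x)) - Φ ((1/2)*(1/x)) < δ * Q := by
    have h2' := h2
    rw [div_sub_div_same, div_lt_iff₀ hP] at h2'
    linarith
  have hlo : (1 - ε) * Q < R := by
    have h2e : 2*Real.exp 1*δ = ε'/8 := by rw [hδdef]; field_simp; ring
    have h7 := mul_lt_mul_of_pos_left hl1 (by positivity : (0:ℝ) < 2*Real.exp 1)
    nlinarith [mul_pos hP (show (0:ℝ) < ε - ε'/8 by linarith)]
  rw [Real.dist_eq, abs_lt]
  constructor
  · have := (lt_div_iff₀ hP).2 hlo
    linarith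
  · have := (div_lt_iff₀ hP).2 hup
    linarith
end
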